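/- Let W : ℝ^d × M^{m×d} → [0,∞] be Borel measurable and 1-periodic in its first variable, and let G : M^{m×d} → [0,∞] and β > 0 satisfy W(x,ξ) ≤ β(1 + G(ξ)) for all (x,ξ). For ξ ∈ M^{m×d} define 𝒮_ξ(A) := inf { ∫_A W(x, ξ + ∇φ(x)) dx : φ ∈ W^{1,p}_0(A;ℝ^m) } for bounded open A ⊂ ℝ^d. Then 𝒮_ξ is subadditive, ℤ^d-invariant, and satisfies 𝒮_ξ(A) ≤ β(1 + G(ξ))|A|; consequently, for every ξ with G(ξ) < ∞ and every open cube Q, lim_{ε→0} 𝒮_ξ((1/ε)Q)/|(1/ε)Q| = inf_{k≥1} 𝒮_ξ(kY)/k^d with Y = (0,1)^d. -/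

import Mathlib

open MeasureTheory ENNReal Filter Pointwise Bornology

noncomputable instance {m d : ℕ} : MeasurableSpace (Matrix (Fin m) (Fin d) ℝ) := borel _
instance {m d : ℕ} : BorelSpace (Matrix (Fin m) (Fin d) ℝ) := ⟨rfl⟩

/-- The open cube `(0,k)^d` in `ℝ^d`. -/
def cube (d : ℕ) (k : ℕ) : Set (EuclideanSpace ℝ (Fin d)) :=
  {x | ∀ i, x i ∈ Set.Ioo (0 : ℝ) (k : ℝ)}

/-- The gradient matrix `∇φ(x)` of a map `φ : ℝ^d → ℝ^m`. -/
noncomputable def gradMat {d m : ℕ} (φ : EuclideanSpace ℝ (Fin d) → EuclideanSpace ℝ (Fin m))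
    (x : EuclideanSpace ℝ (Fin d)) : Matrix (Fin m) (Fin d) ℝ :=
  Matrix.of fun i j => fderiv ℝ φ x (EuclideanSpace.single j 1) i

/-- A model for `W^{1,p}_0(A;ℝ^m)`. -/
def W1p0 {d m : ℕ} (p : ℝ≥0∞) (A : Set (EuclideanSpace ℝ (Fin d))) :
    Set (EuclideanSpace ℝ (Fin d) → EuclideanSpace ℝ (Fin m)) :=
  {φ | ContDiff ℝ 1 φ ∧ tsupport φ ⊆ A ∧ MeasureTheory.MemLp φ p ∧
    MeasureTheory.MemLp (fun x => fderiv ℝ φ x) p}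

/-- The Dirichlet set function `𝒮_ξ(A)`. -/
noncomputable def dirichletSetFn {d m : ℕ} (p : ℝ≥0∞)
    (W : EuclideanSpace ℝ (Fin d) → Matrix (Fin m) (Fin d) ℝ → ℝ≥0∞)
    (ξ : Matrix (Fin m) (Fin d) ℝ) (A : Set (EuclideanSpace ℝ (Fin d))) : ℝ≥0∞ :=
  ⨅ φ ∈ W1p0 (d := d) (m := m) p A, ∫⁻ x in A, W x (ξ + gradMat φ x)

/-!
Testing with `φ = 0` bounds `𝒮_ξ(A)` by `β (1 + G ξ) |A|`; adding test functions supported in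
disjoint open sets gives subadditivity, and translating them by lattice vectors gives
`ℤ^d`-invariance. The limit uses only these three properties. A cube of side `t` contains
disjoint lattice translates of `kY` covering all but a boundary layer of width `2k`, so the
ratio is eventually at most `𝒮_ξ(kY)/k^d` plus an error; and it sits inside a lattice
translate of `(⌈t⌉ + 1)Y`, whose excess volume is `O(t^(d-1))`, so the ratio is eventually at
least `inf_k 𝒮_ξ(kY)/k^d` minus an error.
-/

open Set Topology
open scoped Finset

variable {d : ℕ}

def openCube (a : Fin d → ℝ) (t : ℝ) : Set (EuclideanSpace ℝ (Fin d)) :=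
  {x | ∀ i, x i ∈ Ioo (a i) (a i + t)}

lemma openCube_eq_preimage (a : Fin d → ℝ) (t : ℝ) :
    openCube a t = WithLp.ofLp ⁻¹' univ.pi fun i => Ioo (a i) (a i + t) := by
  ext x; simp only [openCube, mem_ofPred_eq, mem_preimage, Set.mem_pi, mem_univ, forall_const]

lemma isOpen_openCube (a : Fin d → ℝ) (t : ℝ) : IsOpen (openCube a t) := by
  rw [openCube_eq_preimage]
  exact (isOpen_set_pi finite_univ fun _ _ => isOpen_Ioo).preimage (PiLp.continuous_ofLp 2 _)

lemma isBounded_openCube (a : Fin d → ℝ) (t : ℝ) : IsBounded (openCube a t) := by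
  rw [openCube_eq_preimage]
  exact (PiLp.antilipschitzWith_ofLp 2 _).isBounded_preimage
    (isBounded_pi.mpr (Or.inr fun _ => Metric.isBounded_Ioo _ _))

lemma convex_openCube (a : Fin d → ℝ) (t : ℝ) : Convex ℝ (openCube a t) :=
  fun x hx y hy r s hr hs hrs i => by
    simpa using convex_Ioo (a i) (a i + t) (hx i) (hy i) hr hs hrs

lemma closure_openCube_subset (a : Fin d → ℝ) (t : ℝ) :
    closure (openCube a t) ⊆ {x | ∀ i, x i ∈ Icc (a i) (a i + t)} := by
  refine closure_minimal (fun x hx i => Ioo_subset_Icc_self (hx i)) ?_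
  have : {x : EuclideanSpace ℝ (Fin d) | ∀ i, x i ∈ Icc (a i) (a i + t)} =
      WithLp.ofLp ⁻¹' univ.pi fun i => Icc (a i) (a i + t) := by
    ext x; simp only [mem_ofPred_eq, mem_preimage, Set.mem_pi, mem_univ, forall_const]
  rw [this]
  exact (isClosed_set_pi fun _ _ => isClosed_Icc).preimage (PiLp.continuous_ofLp 2 _)

lemma volume_openCube (a : Fin d → ℝ) (t : ℝ) : volume (openCube a t) = ENNReal.ofReal t ^ d := by
  rw [openCube_eq_preimage, ← MeasurableEquiv.coe_toLp_symm,
    (EuclideanSpace.volume_preserving_symm_measurableEquiv_toLp (Fin d)).measure_preimage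
      (MeasurableSet.univ_pi fun _ => measurableSet_Ioo).nullMeasurableSet]
  simp [volume_pi_pi, Real.volume_Ioo]

lemma volume_closure_openCube_diff (a : Fin d → ℝ) (t : ℝ) :
    volume (closure (openCube a t) \ openCube a t) = 0 := by
  simpa [frontier, (isOpen_openCube a t).interior_eq] using
    (convex_openCube a t).addHaar_frontier volume

lemma image_add_openCube (v : EuclideanSpace ℝ (Fin d)) (a : Fin d → ℝ) (t : ℝ) :
    (· + v) '' openCube a t = openCube (fun i => a i + v i) t := by
  ext x
  simp only [openCube, image_add_right, mem_preimage, mem_ofPred_eq, mem_Ioo, PiLp.add_apply,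
    PiLp.neg_apply]
  exact forall_congr' fun i => by constructor <;> intro h <;> constructor <;> linarith [h.1, h.2]

lemma smul_openCube {r : ℝ} (hr : 0 < r) (a : Fin d → ℝ) (t : ℝ) :
    r • openCube a t = openCube (r • a) (r * t) := by
  ext x
  simp only [mem_smul_set_iff_inv_smul_mem₀ hr.ne', openCube, mem_ofPred_eq, mem_Ioo,
    PiLp.smul_apply, Pi.smul_apply, smul_eq_mul]
  refine forall_congr' fun i => ?_
  rw [← mul_lt_mul_iff_right₀ hr, ← mul_lt_mul_iff_right₀ hr (b := r⁻¹ * x i), ← mul_assoc,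
    mul_inv_cancel₀ hr.ne', one_mul, mul_add]

lemma cube_eq_openCube (k : ℕ) : cube d k = openCube 0 k := by
  ext x; simp [cube, openCube]

def latticeCube (k : ℕ) (z : Fin d → ℤ) : Set (EuclideanSpace ℝ (Fin d)) :=
  openCube (fun i => k * z i) k

lemma volume_latticeCube (k : ℕ) (z : Fin d → ℤ) : volume (latticeCube k z) = (k : ℝ≥0∞) ^ d := by
  simp [latticeCube, volume_openCube]

lemma disjoint_latticeCube_closure {k : ℕ} (hk : 0 < k) {z z' : Fin d → ℤ} (h : z ≠ z') :
    Disjoint (latticeCube k z) (closure (latticeCube k z')) := by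
  obtain ⟨i, hi⟩ := Function.ne_iff.mp h
  refine disjoint_left.mpr fun x hx hx' => ?_
  have h1 := hx i
  have h2 := closure_openCube_subset _ _ hx' i
  simp only [mem_Ioo, mem_Icc] at h1 h2
  have hk' : (0 : ℝ) < k := by exact_mod_cast hk
  rcases hi.lt_or_gt with hlt | hlt
  · have : (z i : ℝ) + 1 ≤ z' i := by exact_mod_cast hlt
    nlinarith
  · have : (z' i : ℝ) + 1 ≤ z i := by exact_mod_cast hlt
    nlinarith

lemma volume_biUnion_latticeCube {k : ℕ} (hk : 0 < k) (Z : Finset (Fin d → ℤ)) :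
    volume (⋃ z ∈ Z, latticeCube k z) = #Z * (k : ℝ≥0∞) ^ d := by
  rw [measure_biUnion_finset (fun z _ z' _ h => (disjoint_latticeCube_closure hk h).mono_right
    subset_closure) fun z _ => (isOpen_openCube _ _).measurableSet]
  simp [volume_latticeCube]

/-- Corners of the lattice cubes of side `k` that lie inside `openCube a t`. -/
noncomputable def latticeCorners (k : ℕ) (a : Fin d → ℝ) (t : ℝ) : Finset (Fin d → ℤ) :=
  Fintype.piFinset fun i => Finset.Icc ⌈a i / k⌉ (⌊(a i + t) / k⌋ - 1)

lemma latticeCube_subset_openCube {k : ℕ} (hk : 0 < k) {a : Fin d → ℝ} {t : ℝ}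
    {z : Fin d → ℤ} (hz : z ∈ latticeCorners k a t) : latticeCube k z ⊆ openCube a t := by
  intro x hx i
  have hk' : (0 : ℝ) < k := by exact_mod_cast hk
  have hzi := Finset.mem_Icc.mp (Fintype.mem_piFinset.mp hz i)
  have hlow : a i / k ≤ z i := (Int.ceil_le.mp hzi.1)
  have hup : (z i : ℝ) + 1 ≤ (a i + t) / k := by
    exact_mod_cast Int.le_floor.mp (show z i + 1 ≤ ⌊(a i + t) / k⌋ by omega)
  rw [div_le_iff₀ hk'] at hlow
  rw [le_div_iff₀ hk'] at hup
  have := hx i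
  simp only [mem_Ioo] at this ⊢
  constructor <;> nlinarith [this.1, this.2]

lemma biUnion_latticeCorners_subset {k : ℕ} (hk : 0 < k) (a : Fin d → ℝ) (t : ℝ) :
    ⋃ z ∈ latticeCorners k a t, latticeCube k z ⊆ openCube a t :=
  iUnion₂_subset fun _ hz => latticeCube_subset_openCube hk hz

lemma card_latticeCorners_mul_le {k : ℕ} (hk : 0 < k) (a : Fin d → ℝ) (t : ℝ) :
    #(latticeCorners k a t) * (k : ℝ≥0∞) ^ d ≤ ENNReal.ofReal t ^ d := by
  rw [← volume_biUnion_latticeCube hk, ← volume_openCube a t]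
  exact measure_mono (biUnion_latticeCorners_subset hk a t)

lemma ofReal_sub_two_mul_pow_le {k : ℕ} (hk : 0 < k) (a : Fin d → ℝ) (t : ℝ) :
    ENNReal.ofReal (t - 2 * k) ^ d ≤ #(latticeCorners k a t) * (k : ℝ≥0∞) ^ d := by
  have hk' : (0 : ℝ) < k := by exact_mod_cast hk
  have hcoord : ∀ i, t - 2 * k ≤ k * #(Finset.Icc ⌈a i / k⌉ (⌊(a i + t) / k⌋ - 1)) := fun i => by
    rw [Int.card_Icc, sub_add_cancel]
    have hceil := Int.ceil_lt_add_one (a i / k)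
    have hfloor := Int.sub_one_lt_floor ((a i + t) / k)
    have htoNat : ((⌊(a i + t) / k⌋ - ⌈a i / k⌉ : ℤ) : ℝ) ≤ (⌊(a i + t) / k⌋ - ⌈a i / k⌉).toNat :=
      by exact_mod_cast Int.self_le_toNat _
    push_cast at htoNat
    have : t / k - 2 ≤ (⌊(a i + t) / k⌋ - ⌈a i / k⌉).toNat := by linarith [add_div (a i) t k]
    rw [sub_le_iff_le_add, div_le_iff₀ hk'] at this
    linarith
  calc ENNReal.ofReal (t - 2 * k) ^ d = ∏ _i : Fin d, ENNReal.ofReal (t - 2 * k) := by simp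
    _ ≤ ∏ i : Fin d, (#(Finset.Icc ⌈a i / k⌉ (⌊(a i + t) / k⌋ - 1)) * (k : ℝ≥0∞)) :=
        Finset.prod_le_prod' fun i _ => by
          simpa [ENNReal.ofReal_mul, mul_comm] using ENNReal.ofReal_le_ofReal (hcoord i)
    _ = #(latticeCorners k a t) * (k : ℝ≥0∞) ^ d := by
        simp [latticeCorners, Fintype.card_piFinset, Finset.prod_mul_distrib]

lemma volume_openCube_diff_latticeCubes_le {k : ℕ} (hk : 0 < k) (a : Fin d → ℝ) (t : ℝ) :
    volume (openCube a t \ ⋃ z ∈ latticeCorners k a t, closure (latticeCube k z)) ≤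
      ENNReal.ofReal t ^ d - ENNReal.ofReal (t - 2 * k) ^ d := by
  have hfin : volume (⋃ z ∈ latticeCorners k a t, latticeCube k z) ≠ ⊤ := by
    simp [volume_biUnion_latticeCube hk, ENNReal.mul_eq_top]
  calc volume (openCube a t \ ⋃ z ∈ latticeCorners k a t, closure (latticeCube k z))
      ≤ volume (openCube a t \ ⋃ z ∈ latticeCorners k a t, latticeCube k z) :=
        measure_mono (sdiff_subset_sdiff_right (iUnion₂_mono fun _ _ => subset_closure))
    _ = ENNReal.ofReal t ^ d - #(latticeCorners k a t) * (k : ℝ≥0∞) ^ d := by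
        rw [measure_sdiff (biUnion_latticeCorners_subset hk a t)
          (Finset.measurableSet_biUnion _ fun _ _ =>
            (isOpen_openCube _ _).measurableSet).nullMeasurableSet
          hfin, volume_openCube, volume_biUnion_latticeCube hk]
    _ ≤ _ := tsub_le_tsub_left (ofReal_sub_two_mul_pow_le hk a t) _

lemma tendsto_ofReal_add_div_pow (s : ℝ) (n : ℕ) :
    Tendsto (fun t : ℝ => ENNReal.ofReal ((t + s) / t) ^ n) atTop (𝓝 1) := by
  have h : Tendsto (fun t : ℝ => 1 + s * t⁻¹) atTop (𝓝 1) := by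
    simpa using (tendsto_inv_atTop_zero.const_mul s).const_add 1
  have h' : Tendsto (fun t : ℝ => (t + s) / t) atTop (𝓝 1) := by
    refine h.congr' ?_
    filter_upwards [eventually_ne_atTop 0] with t ht
    field_simp
  simpa using ENNReal.Tendsto.pow (ENNReal.tendsto_ofReal h')

lemma eventually_mul_ofReal_add_pow_sub_le {c η : ℝ≥0∞} (hc : c ≠ ⊤) (hη : 0 < η) (s s' : ℝ) :
    ∀ᶠ t in atTop, c * (ENNReal.ofReal (t + s) ^ d - ENNReal.ofReal (t + s') ^ d) ≤
      η * ENNReal.ofReal t ^ d := by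
  have hlim : Tendsto (fun t : ℝ => c * (ENNReal.ofReal ((t + s) / t) ^ d -
      ENNReal.ofReal ((t + s') / t) ^ d)) atTop (𝓝 0) := by
    simpa using ENNReal.Tendsto.const_mul (ENNReal.Tendsto.sub (tendsto_ofReal_add_div_pow s d)
      (tendsto_ofReal_add_div_pow s' d) (Or.inl one_ne_top)) (Or.inr hc)
  filter_upwards [hlim.eventually (gt_mem_nhds hη), eventually_gt_atTop 0] with t hlt ht
  have hsplit : ∀ s'' : ℝ, ENNReal.ofReal (t + s'') ^ d =
      ENNReal.ofReal ((t + s'') / t) ^ d * ENNReal.ofReal t ^ d := fun s'' => by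
    rw [← mul_pow, ← ENNReal.ofReal_mul' ht.le, div_mul_cancel₀ _ ht.ne']
  rw [hsplit, hsplit, ← ENNReal.sub_mul fun _ _ => by simp, ← mul_assoc]
  exact mul_le_mul_left hlt.le _

section SetFunction

variable {S : Set (EuclideanSpace ℝ (Fin d)) → ℝ≥0∞} {c : ℝ≥0∞}

def IsSubadditiveSetFn (S : Set (EuclideanSpace ℝ (Fin d)) → ℝ≥0∞) : Prop :=
  ∀ A B C : Set (EuclideanSpace ℝ (Fin d)),
    IsOpen A → IsBounded A → IsOpen B → IsOpen C → B ⊆ A → C ⊆ A → Disjoint B C →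
    volume (A \ (B ∪ C)) = 0 → S A ≤ S B + S C

def IsLatticeInvariantSetFn (S : Set (EuclideanSpace ℝ (Fin d)) → ℝ≥0∞) : Prop :=
  ∀ (A : Set (EuclideanSpace ℝ (Fin d))) (z : Fin d → ℤ), IsOpen A → IsBounded A →
    S ((fun x => x + (WithLp.equiv 2 (Fin d → ℝ)).symm fun i => (z i : ℝ)) '' A) = S A

noncomputable def cubeDensity (S : Set (EuclideanSpace ℝ (Fin d)) → ℝ≥0∞) : ℝ≥0∞ :=
  ⨅ k : ℕ, ⨅ _ : 1 ≤ k, S (cube d k) / (k : ℝ≥0∞) ^ d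

lemma IsSubadditiveSetFn.le_add_diff_closure (hS : IsSubadditiveSetFn S)
    {A B : Set (EuclideanSpace ℝ (Fin d))} (hA : IsOpen A) (hAb : IsBounded A) (hB : IsOpen B)
    (hBA : B ⊆ A) (hBnull : volume (closure B \ B) = 0) :
    S A ≤ S B + S (A \ closure B) := by
  refine hS A B _ hA hAb hB (hA.sdiff isClosed_closure) hBA sdiff_subset
    (disjoint_sdiff_right.mono_right (sdiff_subset_sdiff_right subset_closure)) ?_
  refine measure_mono_null (fun x ⟨hxA, hxBC⟩ => ?_) hBnull
  simp only [mem_union, Set.mem_sdiff, not_or, not_and, not_not] at hxBC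
  exact ⟨hxBC.2 hxA, hxBC.1⟩

lemma IsLatticeInvariantSetFn.openCube_add_int (hS : IsLatticeInvariantSetFn S)
    (a : Fin d → ℝ) (t : ℝ) (z : Fin d → ℤ) :
    S (openCube (fun i => a i + z i) t) = S (openCube a t) := by
  rw [← hS _ z (isOpen_openCube a t) (isBounded_openCube a t), image_add_openCube]
  rfl

lemma IsLatticeInvariantSetFn.apply_latticeCube (hS : IsLatticeInvariantSetFn S) (k : ℕ)
    (z : Fin d → ℤ) : S (latticeCube k z) = S (cube d k) := by
  rw [cube_eq_openCube, ← hS.openCube_add_int 0 k (fun i => k * z i)]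
  simp [latticeCube]

lemma cubeDensity_le (hbound : ∀ A, IsOpen A → IsBounded A → S A ≤ c * volume A) :
    cubeDensity S ≤ c := by
  refine (iInf₂_le 1 le_rfl).trans ?_
  simpa [cube_eq_openCube, volume_openCube] using
    hbound _ (isOpen_openCube 0 1) (isBounded_openCube 0 1)

section

variable (hsub : IsSubadditiveSetFn S) (hinv : IsLatticeInvariantSetFn S)
  (hbound : ∀ A, IsOpen A → IsBounded A → S A ≤ c * volume A)
include hsub hinv hbound

lemma le_card_mul_cube_add_volume_diff {k : ℕ} (hk : 0 < k) (Z : Finset (Fin d → ℤ))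
    {A : Set (EuclideanSpace ℝ (Fin d))} (hA : IsOpen A) (hAb : IsBounded A)
    (hZA : ∀ z ∈ Z, latticeCube k z ⊆ A) :
    S A ≤ #Z * S (cube d k) + c * volume (A \ ⋃ z ∈ Z, closure (latticeCube k z)) := by
  induction Z using Finset.induction_on generalizing A with
  | empty => simpa using hbound A hA hAb
  | @insert z Z hz ih =>
    have hZC : ∀ z' ∈ Z, latticeCube k z' ⊆ A \ closure (latticeCube k z) := fun z' hz' x hx =>
      ⟨hZA z' (Finset.mem_insert_of_mem hz') hx,
        disjoint_left.mp (disjoint_latticeCube_closure hk (ne_of_mem_of_not_mem hz' hz)) hx⟩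
    have hrest := ih (hA.sdiff isClosed_closure) (hAb.subset sdiff_subset) hZC
    rw [sdiff_sdiff, ← Finset.set_biUnion_insert (t := fun z => closure (latticeCube k z))] at hrest
    calc S A ≤ S (latticeCube k z) + S (A \ closure (latticeCube k z)) :=
          hsub.le_add_diff_closure hA hAb (isOpen_openCube _ _) (hZA z (Finset.mem_insert_self z Z))
            (volume_closure_openCube_diff _ _)
      _ ≤ S (cube d k) + (#Z * S (cube d k) +
            c * volume (A \ ⋃ z' ∈ insert z Z, closure (latticeCube k z'))) := by
          rw [hinv.apply_latticeCube]; gcongr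
      _ = _ := by rw [Finset.card_insert_of_notMem hz]; push_cast; ring

lemma openCube_le_of_latticeCubes {k : ℕ} (hk : 0 < k) (a : Fin d → ℝ) (t : ℝ) :
    S (openCube a t) ≤ ENNReal.ofReal t ^ d * (S (cube d k) / (k : ℝ≥0∞) ^ d) +
      c * (ENNReal.ofReal t ^ d - ENNReal.ofReal (t - 2 * k) ^ d) := by
  have hK0 : (k : ℝ≥0∞) ^ d ≠ 0 := pow_ne_zero _ (by exact_mod_cast hk.ne')
  have hKtop : (k : ℝ≥0∞) ^ d ≠ ⊤ := by simp
  calc S (openCube a t)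
      ≤ #(latticeCorners k a t) * S (cube d k) +
          c * volume (openCube a t \ ⋃ z ∈ latticeCorners k a t, closure (latticeCube k z)) :=
        le_card_mul_cube_add_volume_diff hsub hinv hbound hk _ (isOpen_openCube a t)
          (isBounded_openCube a t) fun _ hz => latticeCube_subset_openCube hk hz
    _ = #(latticeCorners k a t) * (k : ℝ≥0∞) ^ d * (S (cube d k) / (k : ℝ≥0∞) ^ d) +
          c * volume (openCube a t \ ⋃ z ∈ latticeCorners k a t, closure (latticeCube k z)) := by
        rw [mul_assoc, ENNReal.mul_div_cancel hK0 hKtop]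
    _ ≤ _ := by
        gcongr
        · exact card_latticeCorners_mul_le hk a t
        · exact volume_openCube_diff_latticeCubes_le hk a t

lemma cube_le_openCube_add (a : Fin d → ℝ) (t : ℝ) :
    S (cube d (⌈t⌉₊ + 1)) ≤
      S (openCube a t) + c * (((⌈t⌉₊ + 1 : ℕ) : ℝ≥0∞) ^ d - ENNReal.ofReal t ^ d) := by
  set k := ⌈t⌉₊ + 1
  set A := openCube (fun i => (⌊a i⌋ : ℝ)) k
  have hcube : S A = S (cube d k) := by
    rw [cube_eq_openCube, ← hinv.openCube_add_int 0 k (fun i => ⌊a i⌋)]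
    simp [A]
  have hBA : openCube a t ⊆ A := fun x hx i => by
    have hxi := hx i
    have hk : t + 1 ≤ k := by simp only [k, Nat.cast_add, Nat.cast_one]; linarith [Nat.le_ceil t]
    simp only [mem_Ioo] at hxi ⊢
    constructor <;> linarith [Int.floor_le (a i), Int.sub_one_lt_floor (a i)]
  have hvol : volume (A \ closure (openCube a t)) ≤ (k : ℝ≥0∞) ^ d - ENNReal.ofReal t ^ d := by
    calc volume (A \ closure (openCube a t)) ≤ volume (A \ openCube a t) :=
          measure_mono (sdiff_subset_sdiff_right subset_closure)
      _ = _ := by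
          rw [measure_sdiff hBA (isOpen_openCube a t).measurableSet.nullMeasurableSet
            (by simp [volume_openCube]), volume_openCube, volume_openCube, ENNReal.ofReal_natCast]
  calc S (cube d k) = S A := hcube.symm
    _ ≤ S (openCube a t) + S (A \ closure (openCube a t)) :=
        hsub.le_add_diff_closure (isOpen_openCube _ _) (isBounded_openCube _ _)
          (isOpen_openCube a t) hBA (volume_closure_openCube_diff a t)
    _ ≤ S (openCube a t) + c * volume (A \ closure (openCube a t)) := by
        gcongr
        exact hbound _ ((isOpen_openCube _ _).sdiff isClosed_closure)
          ((isBounded_openCube _ _).subset sdiff_subset)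
    _ ≤ _ := by gcongr

lemma eventually_div_volume_openCube_le (hc : c ≠ ⊤) {k : ℕ} (hk : 0 < k) {η : ℝ≥0∞}
    (hη : 0 < η) : ∀ᶠ t in atTop, ∀ a,
      S (openCube a t) / volume (openCube a t) ≤ S (cube d k) / (k : ℝ≥0∞) ^ d + η := by
  filter_upwards [eventually_mul_ofReal_add_pow_sub_le hc hη 0 (-(2 * k))] with t herr a
  rw [add_zero, ← sub_eq_add_neg] at herr
  rw [volume_openCube]
  refine ENNReal.div_le_of_le_mul ((openCube_le_of_latticeCubes hsub hinv hbound hk a t).trans ?_)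
  rw [add_mul]
  exact add_le_add (mul_comm _ _).le herr

lemma eventually_cubeDensity_le_div_volume_openCube_add (hc : c ≠ ⊤) {η : ℝ≥0∞} (hη : 0 < η) :
    ∀ᶠ t in atTop, ∀ a,
      cubeDensity S ≤ S (openCube a t) / volume (openCube a t) + η := by
  filter_upwards [eventually_mul_ofReal_add_pow_sub_le hc hη 2 0, eventually_gt_atTop 0]
    with t herr ht a
  rw [add_zero] at herr
  set k := ⌈t⌉₊ + 1
  set V := ENNReal.ofReal t ^ d
  have hV0 : V ≠ 0 := pow_ne_zero _ (ENNReal.ofReal_pos.mpr ht).ne'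
  have hVtop : V ≠ ⊤ := by simp [V]
  have hkV : V ≤ (k : ℝ≥0∞) ^ d := by
    unfold V; rw [← ENNReal.ofReal_natCast]; gcongr; simp only [k, Nat.cast_add, Nat.cast_one]
    linarith [Nat.le_ceil t]
  have hk2 : (k : ℝ≥0∞) ^ d ≤ ENNReal.ofReal (t + 2) ^ d := by
    rw [← ENNReal.ofReal_natCast]; gcongr; simp only [k, Nat.cast_add, Nat.cast_one]
    linarith [Nat.ceil_lt_add_one ht.le]
  have hdens : cubeDensity S * (k : ℝ≥0∞) ^ d ≤ S (cube d k) :=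
    (ENNReal.le_div_iff_mul_le (Or.inl (by simp)) (Or.inl (by simp))).mp
      (iInf₂_le k (Nat.le_add_left 1 _))
  rw [volume_openCube]
  refine (ENNReal.mul_le_mul_iff_left hV0 hVtop).mp ?_
  calc cubeDensity S * V ≤ cubeDensity S * (k : ℝ≥0∞) ^ d := by gcongr
    _ ≤ S (openCube a t) + c * ((k : ℝ≥0∞) ^ d - V) :=
        hdens.trans (cube_le_openCube_add hsub hinv hbound a t)
    _ ≤ S (openCube a t) + η * V :=
        add_le_add le_rfl <| (mul_le_mul_right (tsub_le_tsub_right hk2 V) c).trans herr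
    _ = (S (openCube a t) / V + η) * V := by rw [add_mul, ENNReal.div_mul_cancel hV0 hVtop]

-- The filter `⊤ ×ˢ atTop` makes the limit uniform in the corner of the cube.
theorem tendsto_div_volume_openCube (hc : c ≠ ⊤) :
    Tendsto (fun p : (Fin d → ℝ) × ℝ => S (openCube p.1 p.2) / volume (openCube p.1 p.2))
      (⊤ ×ˢ atTop) (𝓝 (cubeDensity S)) := by
  have hfin : cubeDensity S ≠ ⊤ := ne_top_of_le_ne_top hc (cubeDensity_le hbound)
  rw [ENNReal.tendsto_nhds hfin]
  intro η hη
  obtain ⟨k, hk, hkη⟩ : ∃ k : ℕ, 1 ≤ k ∧ S (cube d k) / (k : ℝ≥0∞) ^ d < cubeDensity S + η / 2 := by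
    simpa [cubeDensity, iInf_lt_iff] using
      ENNReal.lt_add_right hfin (ENNReal.half_pos hη.ne').ne'
  filter_upwards [(eventually_div_volume_openCube_le hsub hinv hbound hc hk
      (ENNReal.half_pos hη.ne')).prod_inr ⊤,
    (eventually_cubeDensity_le_div_volume_openCube_add hsub hinv hbound hc hη).prod_inr ⊤]
    with p hup hlow
  refine ⟨tsub_le_iff_right.mpr (hlow p.1), (hup p.1).trans ?_⟩
  calc S (cube d k) / (k : ℝ≥0∞) ^ d + η / 2 ≤ cubeDensity S + η / 2 + η / 2 := by gcongr
    _ = cubeDensity S + η := by rw [add_assoc, ENNReal.add_halves]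

theorem tendsto_div_volume_smul_openCube (hc : c ≠ ⊤) (a : Fin d → ℝ) {r : ℝ} (hr : 0 < r) :
    Tendsto (fun ε : ℝ => S ((1 / ε) • openCube a r) / volume ((1 / ε) • openCube a r))
      (𝓝[>] 0) (𝓝 (cubeDensity S)) := by
  have hscale : Tendsto (fun ε : ℝ => ((1 / ε) • a, 1 / ε * r)) (𝓝[>] 0) (⊤ ×ˢ atTop) :=
    tendsto_top.prodMk (by simpa using tendsto_inv_nhdsGT_zero.atTop_mul_const hr)
  refine ((tendsto_div_volume_openCube hsub hinv hbound hc).comp hscale).congr' ?_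
  filter_upwards [self_mem_nhdsWithin] with ε hε
  simp only [Function.comp_apply, smul_openCube (one_div_pos.mpr hε)]

end

end SetFunction

section Dirichlet

variable {m : ℕ} {p : ℝ≥0∞} {A : Set (EuclideanSpace ℝ (Fin d))}
  {φ ψ : EuclideanSpace ℝ (Fin d) → EuclideanSpace ℝ (Fin m)}

lemma gradMat_eq_of_fderiv_eq {x y : EuclideanSpace ℝ (Fin d)} (h : fderiv ℝ φ x = fderiv ℝ ψ y) :
    gradMat φ x = gradMat ψ y := by
  simp only [gradMat, h]

lemma gradMat_zero (x : EuclideanSpace ℝ (Fin d)) :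
    gradMat (0 : EuclideanSpace ℝ (Fin d) → EuclideanSpace ℝ (Fin m)) x = 0 := by
  ext i j
  simp [gradMat]

lemma gradMat_add_of_notMem_tsupport {x : EuclideanSpace ℝ (Fin d)} (hx : x ∉ tsupport ψ) :
    gradMat (φ + ψ) x = gradMat φ x :=
  gradMat_eq_of_fderiv_eq <| (show φ + ψ =ᶠ[𝓝 x] φ from
    (notMem_tsupport_iff_eventuallyEq.mp hx).mono fun y hy => by simp [hy]).fderiv_eq

lemma zero_mem_W1p0 : (0 : EuclideanSpace ℝ (Fin d) → EuclideanSpace ℝ (Fin m)) ∈ W1p0 p A :=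
  ⟨contDiff_const, by simp, MemLp.zero, by
    simpa only [Pi.zero_def, fderiv_const_apply] using
      MemLp.zero' (ε := EuclideanSpace ℝ (Fin d) →L[ℝ] EuclideanSpace ℝ (Fin m))⟩

lemma W1p0_mono {B : Set (EuclideanSpace ℝ (Fin d))} (hAB : A ⊆ B) :
    (W1p0 p A : Set (EuclideanSpace ℝ (Fin d) → EuclideanSpace ℝ (Fin m))) ⊆ W1p0 p B :=
  fun _ ⟨hφ, hsupp, hLp, hdLp⟩ => ⟨hφ, hsupp.trans hAB, hLp, hdLp⟩

lemma add_mem_W1p0 (hφ : φ ∈ W1p0 p A) (hψ : ψ ∈ W1p0 p A) : φ + ψ ∈ W1p0 p A := by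
  obtain ⟨hφ1, hφA, hφLp, hdφLp⟩ := hφ
  obtain ⟨hψ1, hψA, hψLp, hdψLp⟩ := hψ
  refine ⟨hφ1.add hψ1, (tsupport_add φ ψ).trans (union_subset hφA hψA),
    MemLp.add (ε := EuclideanSpace ℝ (Fin m)) hφLp hψLp, ?_⟩
  have : (fun x => fderiv ℝ (φ + ψ) x) = fun x => fderiv ℝ φ x + fderiv ℝ ψ x := funext fun x =>
    fderiv_add (hφ1.differentiable one_ne_zero x) (hψ1.differentiable one_ne_zero x)
  rw [this]
  exact MemLp.add (ε := EuclideanSpace ℝ (Fin d) →L[ℝ] EuclideanSpace ℝ (Fin m)) hdφLp hdψLp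

lemma comp_sub_mem_W1p0 (hφ : φ ∈ W1p0 p A) (v : EuclideanSpace ℝ (Fin d)) :
    (fun x => φ (x - v)) ∈ W1p0 p ((· + v) '' A) := by
  obtain ⟨hφ1, hφA, hφLp, hdφLp⟩ := hφ
  have hmp : MeasurePreserving (fun x : EuclideanSpace ℝ (Fin d) => x - v) := by
    simpa [sub_eq_add_neg] using measurePreserving_add_right volume (-v)
  refine ⟨hφ1.comp (contDiff_id.sub contDiff_const), ?_, hφLp.comp_measurePreserving hmp, ?_⟩
  · rw [show (fun x => φ (x - v)) = φ ∘ Homeomorph.subRight v from rfl, tsupport_comp_eq_preimage,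
      image_add_right]
    exact fun x hx => by simpa [sub_eq_add_neg] using hφA hx
  · have : (fun x => fderiv ℝ (fun x => φ (x - v)) x) = (fun y => fderiv ℝ φ y) ∘ (· - v) :=
      funext fun x => fderiv_comp_sub v
    rw [this]
    exact hdφLp.comp_measurePreserving hmp

variable (W : EuclideanSpace ℝ (Fin d) → Matrix (Fin m) (Fin d) ℝ → ℝ≥0∞)
  (ξ : Matrix (Fin m) (Fin d) ℝ)

lemma dirichletSetFn_le_mul_volume {b : ℝ≥0∞} (hW : ∀ x, W x ξ ≤ b) :
    dirichletSetFn p W ξ A ≤ b * volume A :=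
  calc dirichletSetFn p W ξ A ≤ ∫⁻ x in A, W x (ξ + gradMat 0 x) := iInf₂_le 0 zero_mem_W1p0
    _ ≤ ∫⁻ _ in A, b := lintegral_mono fun x => by simpa [gradMat_zero] using hW x
    _ = b * volume A := setLIntegral_const A b

lemma dirichletSetFn_image_add_le {v : EuclideanSpace ℝ (Fin d)}
    (hv : ∀ x ζ, W (x + v) ζ = W x ζ) :
    dirichletSetFn p W ξ ((· + v) '' A) ≤ dirichletSetFn p W ξ A := by
  refine le_iInf₂ fun φ hφ => (iInf₂_le _ (comp_sub_mem_W1p0 hφ v)).trans_eq ?_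
  rw [← (measurePreserving_add_right volume v).setLIntegral_comp_emb
    (MeasurableEquiv.addRight v).measurableEmbedding]
  refine lintegral_congr fun x => ?_
  rw [gradMat_eq_of_fderiv_eq (fderiv_comp_sub v), add_sub_cancel_right, hv]

lemma dirichletSetFn_image_add {v : EuclideanSpace ℝ (Fin d)}
    (hv : ∀ x ζ, W (x + v) ζ = W x ζ) :
    dirichletSetFn p W ξ ((· + v) '' A) = dirichletSetFn p W ξ A := by
  refine le_antisymm (dirichletSetFn_image_add_le W ξ hv) ?_
  have hneg : ∀ x ζ, W (x + -v) ζ = W x ζ := fun x ζ => by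
    rw [← hv, neg_add_cancel_right]
  simpa only [image_image, add_neg_cancel_right, image_id'] using
    dirichletSetFn_image_add_le (A := (· + v) '' A) (p := p) W ξ hneg

lemma dirichletSetFn_le_add {B C : Set (EuclideanSpace ℝ (Fin d))} (hB : MeasurableSet B)
    (hC : MeasurableSet C) (hBA : B ⊆ A) (hCA : C ⊆ A) (hBC : Disjoint B C)
    (hnull : volume (A \ (B ∪ C)) = 0) :
    dirichletSetFn p W ξ A ≤ dirichletSetFn p W ξ B + dirichletSetFn p W ξ C := by
  refine ENNReal.le_iInf_add_iInf fun φ ψ => ENNReal.le_iInf_add_iInf fun hφ hψ => ?_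
  have hφC : ∀ x ∈ C, x ∉ tsupport φ := fun x hx hxφ => disjoint_right.mp hBC hx (hφ.2.1 hxφ)
  have hψB : ∀ x ∈ B, x ∉ tsupport ψ := fun x hx hxψ => disjoint_left.mp hBC hx (hψ.2.1 hxψ)
  have hAe : A =ᵐ[volume] (B ∪ C : Set _) :=
    ae_eq_set.mpr ⟨hnull, by rw [sdiff_eq_empty.mpr (union_subset hBA hCA), measure_empty]⟩
  calc dirichletSetFn p W ξ A ≤ ∫⁻ x in A, W x (ξ + gradMat (φ + ψ) x) :=
        iInf₂_le _ (add_mem_W1p0 (W1p0_mono hBA hφ) (W1p0_mono hCA hψ))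
    _ = (∫⁻ x in B, W x (ξ + gradMat (φ + ψ) x)) + ∫⁻ x in C, W x (ξ + gradMat (φ + ψ) x) := by
        rw [setLIntegral_congr hAe, lintegral_union hC hBC]
    _ = (∫⁻ x in B, W x (ξ + gradMat φ x)) + ∫⁻ x in C, W x (ξ + gradMat ψ x) := by
        congr 1
        · refine setLIntegral_congr_fun hB fun x hx => ?_
          rw [gradMat_add_of_notMem_tsupport (hψB x hx)]
        · refine setLIntegral_congr_fun hC fun x hx => ?_
          rw [add_comm φ, gradMat_add_of_notMem_tsupport (hφC x hx)]

end Dirichlet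

theorem dirichletSetFn_subadditive_invariant_limit_general {d m : ℕ} (p : ℝ≥0∞)
    (W : EuclideanSpace ℝ (Fin d) → Matrix (Fin m) (Fin d) ℝ → ℝ≥0∞)
    (hWper : ∀ (x : EuclideanSpace ℝ (Fin d)) (z : Fin d → ℤ) (ξ : Matrix (Fin m) (Fin d) ℝ),
      W (x + (WithLp.equiv 2 (Fin d → ℝ)).symm fun i => (z i : ℝ)) ξ = W x ξ)
    (G : Matrix (Fin m) (Fin d) ℝ → ℝ≥0∞)
    (β : ℝ≥0∞) (hβ' : β ≠ ⊤)
    (hgrowth : ∀ x ξ, W x ξ ≤ β * (1 + G ξ))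
    (ξ : Matrix (Fin m) (Fin d) ℝ) :
    (∀ A B C : Set (EuclideanSpace ℝ (Fin d)),
        IsOpen A → IsBounded A → IsOpen B → IsOpen C → B ⊆ A → C ⊆ A → Disjoint B C →
        volume (A \ (B ∪ C)) = 0 →
        dirichletSetFn p W ξ A ≤ dirichletSetFn p W ξ B + dirichletSetFn p W ξ C) ∧
    (∀ (A : Set (EuclideanSpace ℝ (Fin d))) (z : Fin d → ℤ), IsOpen A → IsBounded A →
        dirichletSetFn p W ξ
            ((fun x => x + (WithLp.equiv 2 (Fin d → ℝ)).symm fun i => (z i : ℝ)) '' A)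
          = dirichletSetFn p W ξ A) ∧
    (∀ A : Set (EuclideanSpace ℝ (Fin d)), IsOpen A → IsBounded A →
        dirichletSetFn p W ξ A ≤ β * (1 + G ξ) * volume A) ∧
    (G ξ < ⊤ → ∀ Q : Set (EuclideanSpace ℝ (Fin d)),
      (∃ (x₀ : EuclideanSpace ℝ (Fin d)) (r : ℝ), 0 < r ∧
        Q = {y | ∀ i, y i ∈ Set.Ioo (x₀ i) (x₀ i + r)}) →
      Tendsto (fun ε : ℝ => dirichletSetFn p W ξ ((1/ε) • Q) / volume ((1/ε) • Q))
        (nhdsWithin 0 (Set.Ioi 0))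
        (nhds (⨅ k : ℕ, ⨅ _ : 1 ≤ k, dirichletSetFn p W ξ (cube d k) / (k : ℝ≥0∞) ^ d))) := by
  have hsub : IsSubadditiveSetFn (dirichletSetFn p W ξ) := fun _ _ _ _ _ hB hC hBA hCA hBC hnull =>
    dirichletSetFn_le_add W ξ hB.measurableSet hC.measurableSet hBA hCA hBC hnull
  have hinv : IsLatticeInvariantSetFn (dirichletSetFn p W ξ) := fun _ z _ _ =>
    dirichletSetFn_image_add W ξ fun x ζ => hWper x z ζ
  have hbound : ∀ A, dirichletSetFn p W ξ A ≤ β * (1 + G ξ) * volume A := fun _ =>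
    dirichletSetFn_le_mul_volume W ξ fun x => hgrowth x ξ
  refine ⟨hsub, hinv, fun A _ _ => hbound A, fun hG Q ⟨x₀, r, hr, hQ⟩ => ?_⟩
  subst hQ
  exact tendsto_div_volume_smul_openCube hsub hinv (fun A _ _ => hbound A)
    (mul_ne_top hβ' (add_ne_top.mpr ⟨one_ne_top, hG.ne⟩)) (fun i => x₀ i) hr

/-- under periodicity and the growth bound `W(x,ξ) ≤ β(1+G(ξ))`, the set
function `𝒮_ξ` is subadditive, `ℤ^d`-invariant and dominated by `β(1+G(ξ))|A|`;
consequently for `G(ξ) < ∞` the cube limits exist and equal `inf_{k≥1} 𝒮_ξ(kY)/k^d`. -/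
theorem dirichletSetFn_subadditive_invariant_limit {d m : ℕ} (p : ℝ≥0∞) (hp : 1 ≤ p)
    (W : EuclideanSpace ℝ (Fin d) → Matrix (Fin m) (Fin d) ℝ → ℝ≥0∞)
    (hWmeas : Measurable (Function.uncurry W))
    (hWper : ∀ (x : EuclideanSpace ℝ (Fin d)) (z : Fin d → ℤ) (ξ : Matrix (Fin m) (Fin d) ℝ),
      W (x + (WithLp.equiv 2 (Fin d → ℝ)).symm fun i => (z i : ℝ)) ξ = W x ξ)
    (G : Matrix (Fin m) (Fin d) ℝ → ℝ≥0∞) (hGmeas : Measurable G)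
    (β : ℝ≥0∞) (hβ : 0 < β) (hβ' : β ≠ ⊤)
    (hgrowth : ∀ x ξ, W x ξ ≤ β * (1 + G ξ))
    (ξ : Matrix (Fin m) (Fin d) ℝ) :
    (∀ A B C : Set (EuclideanSpace ℝ (Fin d)),
        IsOpen A → IsBounded A → IsOpen B → IsOpen C → B ⊆ A → C ⊆ A → Disjoint B C →
        volume (A \ (B ∪ C)) = 0 →
        dirichletSetFn p W ξ A ≤ dirichletSetFn p W ξ B + dirichletSetFn p W ξ C) ∧
    (∀ (A : Set (EuclideanSpace ℝ (Fin d))) (z : Fin d → ℤ), IsOpen A → IsBounded A →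
        dirichletSetFn p W ξ
            ((fun x => x + (WithLp.equiv 2 (Fin d → ℝ)).symm fun i => (z i : ℝ)) '' A)
          = dirichletSetFn p W ξ A) ∧
    (∀ A : Set (EuclideanSpace ℝ (Fin d)), IsOpen A → IsBounded A →
        dirichletSetFn p W ξ A ≤ β * (1 + G ξ) * volume A) ∧
    (G ξ < ⊤ → ∀ Q : Set (EuclideanSpace ℝ (Fin d)),
      (∃ (x₀ : EuclideanSpace ℝ (Fin d)) (r : ℝ), 0 < r ∧
        Q = {y | ∀ i, y i ∈ Set.Ioo (x₀ i) (x₀ i + r)}) →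
      Tendsto (fun ε : ℝ => dirichletSetFn p W ξ ((1/ε) • Q) / volume ((1/ε) • Q))
        (nhdsWithin 0 (Set.Ioi 0))
        (nhds (⨅ k : ℕ, ⨅ _ : 1 ≤ k, dirichletSetFn p W ξ (cube d k) / (k : ℝ≥0∞) ^ d))) :=
  dirichletSetFn_subadditive_invariant_limit_general p W hWper G β hβ' hgrowth ξ
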